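/- arXiv:1903.08538 — 6 statements merged into one kernel-verified Lean document; each statement's English description precedes it below -/
import Mathlib

section
/- Let b₀, b₁ : ℕ → ℝ satisfy: for i = 0,1 there exist constants 0 < c_{i,0} ≤ c_{i,1} < ∞ and exponents 0 ≤ λᵢ < ∞ with c_{i,0}(n+1)^{λᵢ} ≤ |bᵢ(n)| ≤ c_{i,1}(n+1)^{λᵢ} for all n ∈ ℕ, and suppose b₀(n) > 0 for all n while b₁ alternates in sign, i.e. (−1)ⁿ b₁(n) > 0 for all n. Then for every k ∈ ℕ the determinant b₀(k+1)b₁(k+2) − b₀(k+2)b₁(k+1) is nonzero, so the annihilator A exists and is unique, and A defines a bounded operator on ℓ²(ℕ,ℝ): there exists a constant C < ∞ such that ‖A x‖₂ ≤ C‖x‖₂ for every finitely supported sequence x : ℕ → ℝ. -/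
/-- The action of an infinite matrix `A : ℕ → ℕ → ℝ` on a sequence `x : ℕ → ℝ`. -/
noncomputable def applyMat (A : ℕ → ℕ → ℝ) (x : ℕ → ℝ) : ℕ → ℝ :=
  fun i => ∑' j, A i j * x j

/-- The ℓ² norm of a real sequence. -/
noncomputable def l2norm (x : ℕ → ℝ) : ℝ :=
  Real.sqrt (∑' n, (x n) ^ 2)

/-- `A` is the annihilator of the pair of linear functionals `(b₀, b₁)`:
it is unit lower-triangular with lower bandwidth 2, and each column `k`
satisfies the two linear equations `bᵢ(k) + bᵢ(k+1)·A(k+1,k) + bᵢ(k+2)·A(k+2,k) = 0`. -/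
def IsAnnihilator (b₀ b₁ : ℕ → ℝ) (A : ℕ → ℕ → ℝ) : Prop :=
  (∀ k, A k k = 1) ∧
  (∀ i j, (i < j ∨ j + 2 < i) → A i j = 0) ∧
  (∀ k, b₀ k + b₀ (k + 1) * A (k + 1) k + b₀ (k + 2) * A (k + 2) k = 0 ∧
        b₁ k + b₁ (k + 1) * A (k + 1) k + b₁ (k + 2) * A (k + 2) k = 0)

/-!
Since `b₀ > 0` and consecutive values of `b₁` have opposite signs, the two products in
`b₀(k+1)b₁(k+2) - b₀(k+2)b₁(k+1)` have opposite signs, so its absolute value is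
`|b₀(k+1)||b₁(k+2)| + |b₀(k+2)||b₁(k+1)|`. Cramer's rule gives the two subdiagonals of `A`, and
the growth bounds give `|bᵢ n| ≤ K |bᵢ m|` for `n ≤ m`, which bounds each Cramer numerator by
`K` times the determinant. A lower-banded matrix with bounded entries is bounded on `ℓ²`, being
the sum of its subdiagonals, each of which acts as a weighted shift.
-/

open Finset

lemma l2norm_coe_lp (f : lp (fun _ : ℕ => ℝ) 2) : l2norm f = ‖f‖ := by
  have hinner : ∑' n, (f n) ^ 2 = ‖f‖ ^ 2 := by
    rw [← real_inner_self_eq_norm_sq, lp.inner_eq_tsum]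
    simp [sq]
  rw [l2norm, hinner, Real.sqrt_sq (norm_nonneg f)]

lemma l2norm_sum_le {ι : Type*} (s : Finset ι) {v : ι → ℕ → ℝ} (hv : ∀ d, Memℓp (v d) 2) :
    l2norm (∑ d ∈ s, v d) ≤ ∑ d ∈ s, l2norm (v d) := by
  let f : ι → lp (fun _ : ℕ => ℝ) 2 := fun d => ⟨v d, hv d⟩
  have hsum : ∑ d ∈ s, v d = ⇑(∑ d ∈ s, f d) := (lp.coeFn_sum f s).symm
  rw [hsum, l2norm_coe_lp]
  simpa only [← l2norm_coe_lp] using norm_sum_le s f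

lemma memℓp_two_of_support_finite {x : ℕ → ℝ} (hx : x.support.Finite) : Memℓp x 2 :=
  (memℓp_zero_iff.2 hx).of_exponent_ge bot_le

lemma l2norm_le_mul_of_shift {v x : ℕ → ℝ} {d : ℕ} {M : ℝ} (hM : 0 ≤ M)
    (hx : Summable fun n => x n ^ 2) (hv : ∀ n < d, v n = 0)
    (hvx : ∀ n, |v (n + d)| ≤ M * |x n|) : l2norm v ≤ M * l2norm x := by
  have hsq : ∀ n, v (n + d) ^ 2 ≤ M ^ 2 * x n ^ 2 := fun n => by
    rw [← mul_pow, ← sq_abs, ← sq_abs (M * x n), abs_mul, abs_of_nonneg hM]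
    exact pow_le_pow_left₀ (abs_nonneg _) (hvx n) 2
  have hshift : ∑' n, v (n + d) ^ 2 = ∑' n, v n ^ 2 := by
    refine (add_left_injective d).tsum_eq (f := fun n => v n ^ 2) fun n hn => ⟨n - d, ?_⟩
    have : d ≤ n := by
      by_contra h
      exact hn (by simp [hv n (not_le.1 h)])
    simp only [Nat.sub_add_cancel this]
  have hle : ∑' n, v n ^ 2 ≤ M ^ 2 * ∑' n, x n ^ 2 := by
    rw [← hshift, ← tsum_mul_left]
    exact Summable.tsum_le_tsum hsq
      ((hx.mul_left _).of_nonneg_of_le (fun _ => sq_nonneg _) hsq) (hx.mul_left _)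
  calc l2norm v ≤ √(M ^ 2 * ∑' n, x n ^ 2) := Real.sqrt_le_sqrt hle
    _ = M * l2norm x := by rw [Real.sqrt_mul (sq_nonneg M), Real.sqrt_sq hM, l2norm]

def subdiag (A : ℕ → ℕ → ℝ) (d : ℕ) : ℕ → ℕ → ℝ := fun i j => if i = j + d then A i j else 0

lemma sum_subdiag_eq {A : ℕ → ℕ → ℝ} {w : ℕ} (hband : ∀ i j, (i < j ∨ j + w < i) → A i j = 0)
    (i j : ℕ) : ∑ d ∈ range (w + 1), subdiag A d i j = A i j := by
  by_cases hij : j ≤ i ∧ i ≤ j + w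
  · rw [Finset.sum_eq_single (i - j)]
    · exact if_pos (by omega)
    · exact fun d _ hd => if_neg (by omega)
    · exact fun h => absurd (mem_range.2 (by omega)) h
  · simp [subdiag, hband i j (by omega)]

lemma applyMat_subdiag_add (A : ℕ → ℕ → ℝ) (x : ℕ → ℝ) (d n : ℕ) :
    applyMat (subdiag A d) x (n + d) = A (n + d) n * x n := by
  rw [applyMat, tsum_eq_single n fun j hj => by simp [subdiag, hj.symm]]
  simp [subdiag]

lemma applyMat_subdiag_of_lt (A : ℕ → ℕ → ℝ) (x : ℕ → ℝ) {d n : ℕ} (hn : n < d) :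
    applyMat (subdiag A d) x n = 0 := by
  simp [applyMat, subdiag, show ∀ j, n ≠ j + d by omega]

lemma applyMat_sum {ι : Type*} (s : Finset ι) (B : ι → ℕ → ℕ → ℝ) {x : ℕ → ℝ}
    (hx : x.support.Finite) :
    applyMat (fun i j => ∑ d ∈ s, B d i j) x = ∑ d ∈ s, applyMat (B d) x := by
  ext i
  simp only [applyMat, Finset.sum_apply, Finset.sum_mul]
  refine Summable.tsum_finsetSum fun d _ => summable_of_hasFiniteSupport ?_
  exact hx.subset (Function.support_mul_subset_right _ _)

lemma support_applyMat_subdiag_subset (A : ℕ → ℕ → ℝ) (x : ℕ → ℝ) (d : ℕ) :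
    (applyMat (subdiag A d) x).support ⊆ (· + d) '' x.support := by
  intro n hn
  have hdn : d ≤ n := by
    by_contra h
    exact hn (applyMat_subdiag_of_lt A x (not_le.1 h))
  obtain ⟨m, rfl⟩ := Nat.exists_eq_add_of_le' hdn
  refine ⟨m, fun hm => hn ?_, rfl⟩
  rw [applyMat_subdiag_add, hm, mul_zero]

theorem l2norm_applyMat_le_of_banded {A : ℕ → ℕ → ℝ} {w : ℕ} {M : ℝ}
    (hband : ∀ i j, (i < j ∨ j + w < i) → A i j = 0) (hA : ∀ i j, |A i j| ≤ M)
    {x : ℕ → ℝ} (hx : x.support.Finite) :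
    l2norm (applyMat A x) ≤ (w + 1) * M * l2norm x := by
  have hM : 0 ≤ M := (abs_nonneg _).trans (hA 0 0)
  have hx2 : Summable fun n => x n ^ 2 :=
    summable_of_hasFiniteSupport (hx.subset fun n hn => by simpa using hn)
  have hdiag : ∀ d, l2norm (applyMat (subdiag A d) x) ≤ M * l2norm x := fun d =>
    l2norm_le_mul_of_shift hM hx2 (fun n hn => applyMat_subdiag_of_lt A x hn)
      (fun n => by rw [applyMat_subdiag_add, abs_mul]; gcongr; exact hA _ _)
  calc l2norm (applyMat A x)
      = l2norm (∑ d ∈ range (w + 1), applyMat (subdiag A d) x) := by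
        simp only [← applyMat_sum _ _ hx, sum_subdiag_eq hband]
    _ ≤ ∑ d ∈ range (w + 1), l2norm (applyMat (subdiag A d) x) :=
        l2norm_sum_le _ fun d => memℓp_two_of_support_finite
          ((hx.image _).subset (support_applyMat_subdiag_subset A x d))
    _ ≤ ∑ d ∈ range (w + 1), M * l2norm x := sum_le_sum fun d _ => hdiag d
    _ = (w + 1) * M * l2norm x := by
        simp only [sum_const, card_range, nsmul_eq_mul, Nat.cast_add, Nat.cast_one]; ring

lemma abs_mul_sub_mul_of_mul_neg {a a' c c' : ℝ} (ha : 0 < a) (ha' : 0 < a') (hc : c * c' < 0) :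
    |a * c' - a' * c| = |a| * |c'| + |a'| * |c| := by
  rw [abs_of_pos ha, abs_of_pos ha']
  rcases lt_or_gt_of_ne (left_ne_zero_of_mul hc.ne) with h | h
  · have hc' : 0 < c' := by nlinarith
    rw [abs_of_neg h, abs_of_pos hc', abs_of_pos (by nlinarith)]
    ring
  · have hc' : c' < 0 := by nlinarith
    rw [abs_of_pos h, abs_of_neg hc', abs_of_neg (by nlinarith)]
    ring

lemma abs_le_div_mul_abs_of_le {b : ℕ → ℝ} {c₀ c₁ lam : ℝ} (hc₀ : 0 < c₀) (hlam : 0 ≤ lam)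
    (hb : ∀ n : ℕ, c₀ * ((n : ℝ) + 1) ^ lam ≤ |b n| ∧ |b n| ≤ c₁ * ((n : ℝ) + 1) ^ lam)
    {n m : ℕ} (hnm : n ≤ m) : |b n| ≤ c₁ / c₀ * |b m| := by
  have hc₁ : 0 ≤ c₁ := by simpa using (abs_nonneg _).trans (hb 0).2
  calc |b n| ≤ c₁ * ((n : ℝ) + 1) ^ lam := (hb n).2
    _ ≤ c₁ * ((m : ℝ) + 1) ^ lam := by gcongr
    _ = c₁ / c₀ * (c₀ * ((m : ℝ) + 1) ^ lam) := by field_simp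
    _ ≤ c₁ / c₀ * |b m| := by gcongr; exact (hb m).1

def annihilatorDet (b₀ b₁ : ℕ → ℝ) (k : ℕ) : ℝ :=
  b₀ (k + 1) * b₁ (k + 2) - b₀ (k + 2) * b₁ (k + 1)

section Annihilator

variable {b₀ b₁ : ℕ → ℝ}

lemma abs_annihilatorDet (hb₀ : ∀ n, 0 < b₀ n) (hb₁ : ∀ n, b₁ n * b₁ (n + 1) < 0) (k : ℕ) :
    |annihilatorDet b₀ b₁ k| = |b₀ (k + 1)| * |b₁ (k + 2)| + |b₀ (k + 2)| * |b₁ (k + 1)| :=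
  abs_mul_sub_mul_of_mul_neg (hb₀ _) (hb₀ _) (hb₁ _)

lemma annihilatorDet_ne_zero (hb₀ : ∀ n, 0 < b₀ n) (hb₁ : ∀ n, b₁ n * b₁ (n + 1) < 0) (k : ℕ) :
    annihilatorDet b₀ b₁ k ≠ 0 := by
  have h₀ := hb₀ (k + 1)
  have h₁ : b₁ (k + 2) ≠ 0 := right_ne_zero_of_mul (hb₁ (k + 1)).ne
  rw [← abs_pos, abs_annihilatorDet hb₀ hb₁]
  positivity

/-- The solution of the two equations of column `j` by Cramer's rule. -/
noncomputable def annihilatorMatrix (b₀ b₁ : ℕ → ℝ) (i j : ℕ) : ℝ :=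
  if i = j then 1
  else if i = j + 1 then (b₀ (j + 2) * b₁ j - b₀ j * b₁ (j + 2)) / annihilatorDet b₀ b₁ j
  else if i = j + 2 then (b₀ j * b₁ (j + 1) - b₀ (j + 1) * b₁ j) / annihilatorDet b₀ b₁ j
  else 0

lemma isAnnihilator_annihilatorMatrix (hD : ∀ k, annihilatorDet b₀ b₁ k ≠ 0) :
    IsAnnihilator b₀ b₁ (annihilatorMatrix b₀ b₁) := by
  refine ⟨fun k => if_pos rfl, fun i j h => ?_, fun k => ?_⟩
  · simp only [annihilatorMatrix]
    rw [if_neg (by omega), if_neg (by omega), if_neg (by omega)]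
  · simp only [annihilatorMatrix, if_pos, if_neg (show k + 1 ≠ k by omega),
      if_neg (show k + 2 ≠ k by omega), if_neg (show k + 2 ≠ k + 1 by omega)]
    have hDk := mul_inv_cancel₀ (hD k)
    unfold annihilatorDet at hDk ⊢
    constructor
    · linear_combination (-b₀ k) * hDk
    · linear_combination (-b₁ k) * hDk

namespace IsAnnihilator

variable {A B : ℕ → ℕ → ℝ}

lemma apply_succ_mul_det (hA : IsAnnihilator b₀ b₁ A) (k : ℕ) :
    A (k + 1) k * annihilatorDet b₀ b₁ k = b₀ (k + 2) * b₁ k - b₀ k * b₁ (k + 2) := by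
  obtain ⟨h₀, h₁⟩ := hA.2.2 k
  unfold annihilatorDet
  linear_combination b₁ (k + 2) * h₀ - b₀ (k + 2) * h₁

lemma apply_succ_succ_mul_det (hA : IsAnnihilator b₀ b₁ A) (k : ℕ) :
    A (k + 2) k * annihilatorDet b₀ b₁ k = b₀ k * b₁ (k + 1) - b₀ (k + 1) * b₁ k := by
  obtain ⟨h₀, h₁⟩ := hA.2.2 k
  unfold annihilatorDet
  linear_combination b₀ (k + 1) * h₁ - b₁ (k + 1) * h₀

lemma eq_of_det_ne_zero (hD : ∀ k, annihilatorDet b₀ b₁ k ≠ 0) (hA : IsAnnihilator b₀ b₁ A)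
    (hB : IsAnnihilator b₀ b₁ B) : A = B := by
  funext i j
  by_cases hband : i < j ∨ j + 2 < i
  · rw [hA.2.1 i j hband, hB.2.1 i j hband]
  obtain ⟨d, hd, rfl⟩ : ∃ d ≤ 2, i = j + d := ⟨i - j, by omega, by omega⟩
  interval_cases d
  · simp only [add_zero, hA.1, hB.1]
  · exact mul_right_cancel₀ (hD j) ((hA.apply_succ_mul_det j).trans (hB.apply_succ_mul_det j).symm)
  · exact mul_right_cancel₀ (hD j)
      ((hA.apply_succ_succ_mul_det j).trans (hB.apply_succ_succ_mul_det j).symm)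

variable {K : ℝ}

lemma abs_apply_succ_le (hA : IsAnnihilator b₀ b₁ A) (hb₀ : ∀ n, 0 < b₀ n)
    (hb₁ : ∀ n, b₁ n * b₁ (n + 1) < 0) (hK₀ : ∀ n m, n ≤ m → |b₀ n| ≤ K * |b₀ m|)
    (hK₁ : ∀ n m, n ≤ m → |b₁ n| ≤ K * |b₁ m|) (k : ℕ) : |A (k + 1) k| ≤ K := by
  rw [← mul_le_mul_iff_of_pos_right (abs_pos.2 (annihilatorDet_ne_zero hb₀ hb₁ k)), ← abs_mul,
    hA.apply_succ_mul_det, abs_annihilatorDet hb₀ hb₁]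
  calc |b₀ (k + 2) * b₁ k - b₀ k * b₁ (k + 2)|
      ≤ |b₀ (k + 2)| * |b₁ k| + |b₀ k| * |b₁ (k + 2)| := by
        simpa only [abs_mul] using abs_sub (b₀ (k + 2) * b₁ k) (b₀ k * b₁ (k + 2))
    _ ≤ |b₀ (k + 2)| * (K * |b₁ (k + 1)|) + K * |b₀ (k + 1)| * |b₁ (k + 2)| := by
        gcongr
        · exact hK₁ _ _ (by omega)
        · exact hK₀ _ _ (by omega)
    _ = K * (|b₀ (k + 1)| * |b₁ (k + 2)| + |b₀ (k + 2)| * |b₁ (k + 1)|) := by ring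

lemma abs_apply_succ_succ_le (hA : IsAnnihilator b₀ b₁ A) (hb₀ : ∀ n, 0 < b₀ n)
    (hb₁ : ∀ n, b₁ n * b₁ (n + 1) < 0) (hK₀ : ∀ n m, n ≤ m → |b₀ n| ≤ K * |b₀ m|)
    (hK₁ : ∀ n m, n ≤ m → |b₁ n| ≤ K * |b₁ m|) (k : ℕ) : |A (k + 2) k| ≤ K := by
  rw [← mul_le_mul_iff_of_pos_right (abs_pos.2 (annihilatorDet_ne_zero hb₀ hb₁ k)), ← abs_mul,
    hA.apply_succ_succ_mul_det, abs_annihilatorDet hb₀ hb₁]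
  calc |b₀ k * b₁ (k + 1) - b₀ (k + 1) * b₁ k|
      ≤ |b₀ k| * |b₁ (k + 1)| + |b₀ (k + 1)| * |b₁ k| := by
        simpa only [abs_mul] using abs_sub (b₀ k * b₁ (k + 1)) (b₀ (k + 1) * b₁ k)
    _ ≤ K * |b₀ (k + 2)| * |b₁ (k + 1)| + |b₀ (k + 1)| * (K * |b₁ (k + 2)|) := by
        gcongr
        · exact hK₀ _ _ (by omega)
        · exact hK₁ _ _ (by omega)
    _ = K * (|b₀ (k + 1)| * |b₁ (k + 2)| + |b₀ (k + 2)| * |b₁ (k + 1)|) := by ring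

lemma abs_apply_le (hA : IsAnnihilator b₀ b₁ A) (hb₀ : ∀ n, 0 < b₀ n)
    (hb₁ : ∀ n, b₁ n * b₁ (n + 1) < 0) (hK₀ : ∀ n m, n ≤ m → |b₀ n| ≤ K * |b₀ m|)
    (hK₁ : ∀ n m, n ≤ m → |b₁ n| ≤ K * |b₁ m|) (i j : ℕ) : |A i j| ≤ max 1 K := by
  by_cases hband : i < j ∨ j + 2 < i
  · rw [hA.2.1 i j hband, abs_zero]
    exact zero_le_one.trans (le_max_left _ _)
  obtain ⟨d, hd, rfl⟩ : ∃ d ≤ 2, i = j + d := ⟨i - j, by omega, by omega⟩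
  interval_cases d
  · simp [hA.1]
  · exact (hA.abs_apply_succ_le hb₀ hb₁ hK₀ hK₁ j).trans (le_max_right _ _)
  · exact (hA.abs_apply_succ_succ_le hb₀ hb₁ hK₀ hK₁ j).trans (le_max_right _ _)

end IsAnnihilator

end Annihilator

theorem annihilator_exists_unique_and_bounded_general
    (b₀ b₁ : ℕ → ℝ)
    (c₀₀ c₀₁ c₁₀ c₁₁ : ℝ) (lam₀ lam₁ : ℝ)
    (hc₀₀ : 0 < c₀₀) (hc₁₀ : 0 < c₁₀)
    (hlam₀ : 0 ≤ lam₀) (hlam₁ : 0 ≤ lam₁)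
    (hb₀bound : ∀ n : ℕ, c₀₀ * ((n : ℝ) + 1) ^ lam₀ ≤ |b₀ n| ∧
                         |b₀ n| ≤ c₀₁ * ((n : ℝ) + 1) ^ lam₀)
    (hb₁bound : ∀ n : ℕ, c₁₀ * ((n : ℝ) + 1) ^ lam₁ ≤ |b₁ n| ∧
                         |b₁ n| ≤ c₁₁ * ((n : ℝ) + 1) ^ lam₁)
    (hb₀pos : ∀ n : ℕ, 0 < b₀ n)
    (hb₁alt : ∀ n : ℕ, 0 < (-1 : ℝ) ^ n * b₁ n) :
    (∀ k : ℕ, b₀ (k + 1) * b₁ (k + 2) - b₀ (k + 2) * b₁ (k + 1) ≠ 0) ∧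
    (∃! A : ℕ → ℕ → ℝ, IsAnnihilator b₀ b₁ A) ∧
    (∀ A : ℕ → ℕ → ℝ, IsAnnihilator b₀ b₁ A →
      ∃ C : ℝ, ∀ x : ℕ → ℝ, (Function.support x).Finite →
        l2norm (applyMat A x) ≤ C * l2norm x) := by
  have hb₁ : ∀ n, b₁ n * b₁ (n + 1) < 0 := fun n => by
    have hsq : ((-1 : ℝ) ^ n) ^ 2 = 1 := by rw [← pow_mul, mul_comm, pow_mul, neg_one_sq, one_pow]
    have hprod := mul_pos (hb₁alt n) (hb₁alt (n + 1))
    rw [pow_succ] at hprod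
    linear_combination hprod - b₁ n * b₁ (n + 1) * hsq
  have hD := annihilatorDet_ne_zero hb₀pos hb₁
  have hA₀ := isAnnihilator_annihilatorMatrix hD
  refine ⟨hD, ⟨_, hA₀, fun B hB => hB.eq_of_det_ne_zero hD hA₀⟩, fun A hA => ?_⟩
  set K := max (c₀₁ / c₀₀) (c₁₁ / c₁₀)
  have hK₀ : ∀ n m, n ≤ m → |b₀ n| ≤ K * |b₀ m| := fun n m hnm =>
    (abs_le_div_mul_abs_of_le hc₀₀ hlam₀ hb₀bound hnm).trans
      (mul_le_mul_of_nonneg_right (le_max_left _ _) (abs_nonneg _))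
  have hK₁ : ∀ n m, n ≤ m → |b₁ n| ≤ K * |b₁ m| := fun n m hnm =>
    (abs_le_div_mul_abs_of_le hc₁₀ hlam₁ hb₁bound hnm).trans
      (mul_le_mul_of_nonneg_right (le_max_right _ _) (abs_nonneg _))
  exact ⟨_, fun x hx =>
    l2norm_applyMat_le_of_banded hA.2.1 (hA.abs_apply_le hb₀pos hb₁ hK₀ hK₁) hx⟩

theorem annihilator_exists_unique_and_bounded
    (b₀ b₁ : ℕ → ℝ)
    (c₀₀ c₀₁ c₁₀ c₁₁ : ℝ) (lam₀ lam₁ : ℝ)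
    (hc₀₀ : 0 < c₀₀) (hc₀ : c₀₀ ≤ c₀₁) (hc₁₀ : 0 < c₁₀) (hc₁ : c₁₀ ≤ c₁₁)
    (hlam₀ : 0 ≤ lam₀) (hlam₁ : 0 ≤ lam₁)
    (hb₀bound : ∀ n : ℕ, c₀₀ * ((n : ℝ) + 1) ^ lam₀ ≤ |b₀ n| ∧
                         |b₀ n| ≤ c₀₁ * ((n : ℝ) + 1) ^ lam₀)
    (hb₁bound : ∀ n : ℕ, c₁₀ * ((n : ℝ) + 1) ^ lam₁ ≤ |b₁ n| ∧
                         |b₁ n| ≤ c₁₁ * ((n : ℝ) + 1) ^ lam₁)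
    (hb₀pos : ∀ n : ℕ, 0 < b₀ n)
    (hb₁alt : ∀ n : ℕ, 0 < (-1 : ℝ) ^ n * b₁ n) :
    (∀ k : ℕ, b₀ (k + 1) * b₁ (k + 2) - b₀ (k + 2) * b₁ (k + 1) ≠ 0) ∧
    (∃! A : ℕ → ℕ → ℝ, IsAnnihilator b₀ b₁ A) ∧
    (∀ A : ℕ → ℕ → ℝ, IsAnnihilator b₀ b₁ A →
      ∃ C : ℝ, ∀ x : ℕ → ℝ, (Function.support x).Finite →
        l2norm (applyMat A x) ≤ C * l2norm x) :=
  annihilator_exists_unique_and_bounded_general b₀ b₁ c₀₀ c₀₁ c₁₀ c₁₁ lam₀ lam₁ hc₀₀ hc₁₀ hlam₀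
    hlam₁ hb₀bound hb₁bound hb₀pos hb₁alt
end

section
/- Let b₀, b₁ : ℕ → ℝ satisfy: for i = 0,1 there exist constants 0 < c_{i,0} ≤ c_{i,1} < ∞ and exponents 0 ≤ λᵢ < ∞ with c_{i,0}(n+1)^{λᵢ} ≤ |bᵢ(n)| ≤ c_{i,1}(n+1)^{λᵢ} for all n, b₀(n) > 0 for all n, and (−1)ⁿ b₁(n) > 0 for all n. Define for each k: a(k+1,k) = (b₀(k+2)b₁(k) − b₁(k+2)b₀(k)) / (b₀(k+1)b₁(k+2) − b₀(k+2)b₁(k+1)) and a(k+2,k) = (b₁(k+1)b₀(k) − b₀(k+1)b₁(k)) / (b₀(k+1)b₁(k+2) − b₀(k+2)b₁(k+1)). Then there exists a constant K < ∞, independent of k, such that |a(k+1,k)| ≤ K and |a(k+2,k)| ≤ K for all k ∈ ℕ. -/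
set_option maxHeartbeats 1000000 in


theorem annihilator_entries_uniformly_bounded
    (b₀ b₁ : ℕ → ℝ)
    (c₀₀ c₀₁ c₁₀ c₁₁ : ℝ) (lam₀ lam₁ : ℝ)
    (hc₀₀ : 0 < c₀₀) (hc₀ : c₀₀ ≤ c₀₁) (hc₁₀ : 0 < c₁₀) (hc₁ : c₁₀ ≤ c₁₁)
    (hlam₀ : 0 ≤ lam₀) (hlam₁ : 0 ≤ lam₁)
    (hb₀bound : ∀ n : ℕ, c₀₀ * ((n : ℝ) + 1) ^ lam₀ ≤ |b₀ n| ∧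
                         |b₀ n| ≤ c₀₁ * ((n : ℝ) + 1) ^ lam₀)
    (hb₁bound : ∀ n : ℕ, c₁₀ * ((n : ℝ) + 1) ^ lam₁ ≤ |b₁ n| ∧
                         |b₁ n| ≤ c₁₁ * ((n : ℝ) + 1) ^ lam₁)
    (hb₀pos : ∀ n : ℕ, 0 < b₀ n)
    (hb₁alt : ∀ n : ℕ, 0 < (-1 : ℝ) ^ n * b₁ n)
    (a₁ a₂ : ℕ → ℝ)
    (ha₁ : ∀ k : ℕ, a₁ k = (b₀ (k + 2) * b₁ k - b₁ (k + 2) * b₀ k) /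
              (b₀ (k + 1) * b₁ (k + 2) - b₀ (k + 2) * b₁ (k + 1)))
    (ha₂ : ∀ k : ℕ, a₂ k = (b₁ (k + 1) * b₀ k - b₀ (k + 1) * b₁ k) /
              (b₀ (k + 1) * b₁ (k + 2) - b₀ (k + 2) * b₁ (k + 1))) :
    ∃ K : ℝ, ∀ k : ℕ, |a₁ k| ≤ K ∧ |a₂ k| ≤ K := by
  have hc₀₁pos : (0:ℝ) < c₀₁ := lt_of_lt_of_le hc₀₀ hc₀
  have hc₁₁pos : (0:ℝ) < c₁₁ := lt_of_lt_of_le hc₁₀ hc₁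
  have hb₀abs : ∀ n : ℕ, |b₀ n| = b₀ n := fun n => abs_of_pos (hb₀pos n)
  have hb₁abs : ∀ n : ℕ, |b₁ n| = (-1 : ℝ) ^ n * b₁ n := by
    intro n
    have h := abs_of_pos (hb₁alt n)
    rw [abs_mul, abs_pow, abs_neg, abs_one, one_pow, one_mul] at h
    exact h
  refine ⟨(c₀₁ * c₁₁) / (c₀₀ * c₁₀) * ((3 : ℝ) ^ lam₀ + (3 : ℝ) ^ lam₁ + 2), fun k => ?_⟩
  set P₀ : ℕ → ℝ := fun n => ((n : ℝ) + 1) ^ lam₀ with hP₀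
  set P₁ : ℕ → ℝ := fun n => ((n : ℝ) + 1) ^ lam₁ with hP₁
  have hP₀pos : ∀ n : ℕ, 0 < P₀ n := fun n =>
    Real.rpow_pos_of_pos (by positivity) _
  have hP₁pos : ∀ n : ℕ, 0 < P₁ n := fun n =>
    Real.rpow_pos_of_pos (by positivity) _
  have hP₀mono : ∀ m n : ℕ, m ≤ n → P₀ m ≤ P₀ n := fun m n h =>
    Real.rpow_le_rpow (by positivity)
      (by have : (m:ℝ) ≤ (n:ℝ) := Nat.cast_le.mpr h; linarith) hlam₀
  have hP₁mono : ∀ m n : ℕ, m ≤ n → P₁ m ≤ P₁ n := fun m n h =>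
    Real.rpow_le_rpow (by positivity)
      (by have : (m:ℝ) ≤ (n:ℝ) := Nat.cast_le.mpr h; linarith) hlam₁
  have h3pow : P₀ (k + 2) ≤ (3 : ℝ) ^ lam₀ * P₀ (k + 1) := by
    have h1 : ((k + 2 : ℕ) : ℝ) + 1 ≤ 3 * (((k + 1 : ℕ) : ℝ) + 1) := by push_cast; linarith
    calc P₀ (k + 2) ≤ (3 * (((k + 1 : ℕ) : ℝ) + 1)) ^ lam₀ :=
          Real.rpow_le_rpow (by positivity) h1 hlam₀
      _ = (3 : ℝ) ^ lam₀ * P₀ (k + 1) := by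
          rw [Real.mul_rpow (by norm_num) (by positivity)]
  set D : ℝ := b₀ (k + 1) * b₁ (k + 2) - b₀ (k + 2) * b₁ (k + 1) with hD
  have e2 : |b₁ (k + 2)| = (-1 : ℝ) ^ k * b₁ (k + 2) := by
    rw [hb₁abs (k + 2)]
    congr 1
    rw [pow_add]; norm_num
  have e1 : |b₁ (k + 1)| = -((-1 : ℝ) ^ k * b₁ (k + 1)) := by
    rw [hb₁abs (k + 1), pow_succ]; ring
  have hDge : b₀ (k + 1) * |b₁ (k + 2)| + b₀ (k + 2) * |b₁ (k + 1)| ≤ |D| := by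
    have hle := le_abs_self ((-1 : ℝ) ^ k * D)
    rw [abs_mul, abs_pow, abs_neg, abs_one, one_pow, one_mul] at hle
    calc b₀ (k + 1) * |b₁ (k + 2)| + b₀ (k + 2) * |b₁ (k + 1)|
        = (-1 : ℝ) ^ k * D := by rw [e2, e1, hD]; ring
      _ ≤ |D| := hle
  have hb₀lb : ∀ n : ℕ, c₀₀ * P₀ n ≤ b₀ n := fun n => by
    have := (hb₀bound n).1; rwa [hb₀abs n] at this
  have hb₁lb : ∀ n : ℕ, c₁₀ * P₁ n ≤ |b₁ n| := fun n => (hb₁bound n).1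
  have hb₀ub : ∀ n : ℕ, b₀ n ≤ c₀₁ * P₀ n := fun n => by
    have := (hb₀bound n).2; rwa [hb₀abs n] at this
  have hb₁ub : ∀ n : ℕ, |b₁ n| ≤ c₁₁ * P₁ n := fun n => (hb₁bound n).2
  have hDlb : c₀₀ * P₀ (k + 1) * (c₁₀ * P₁ (k + 2)) ≤ |D| := by
    have h1 : c₀₀ * P₀ (k + 1) * (c₁₀ * P₁ (k + 2)) ≤ b₀ (k + 1) * |b₁ (k + 2)| :=
      mul_le_mul (hb₀lb _) (hb₁lb _)
        (le_of_lt (mul_pos hc₁₀ (hP₁pos _))) (le_of_lt (hb₀pos _))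
    have h2 : 0 ≤ b₀ (k + 2) * |b₁ (k + 1)| :=
      mul_nonneg (le_of_lt (hb₀pos _)) (abs_nonneg _)
    linarith
  have hDpos : 0 < |D| :=
    lt_of_lt_of_le (mul_pos (mul_pos hc₀₀ (hP₀pos _)) (mul_pos hc₁₀ (hP₁pos _))) hDlb
  have hMpos : (0:ℝ) < (3 : ℝ) ^ lam₀ + (3 : ℝ) ^ lam₁ + 2 := by positivity
  have h3₀pos : (0:ℝ) < (3 : ℝ) ^ lam₀ := Real.rpow_pos_of_pos (by norm_num) _
  have h3₁pos : (0:ℝ) < (3 : ℝ) ^ lam₁ := Real.rpow_pos_of_pos (by norm_num) _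
  have hKnonneg : 0 ≤ (c₀₁ * c₁₁) / (c₀₀ * c₁₀) * ((3 : ℝ) ^ lam₀ + (3 : ℝ) ^ lam₁ + 2) :=
    le_of_lt (mul_pos (div_pos (mul_pos hc₀₁pos hc₁₁pos) (mul_pos hc₀₀ hc₁₀)) hMpos)
  have hKD : (c₀₁ * c₁₁) / (c₀₀ * c₁₀) * ((3 : ℝ) ^ lam₀ + (3 : ℝ) ^ lam₁ + 2) *
        (c₀₀ * P₀ (k + 1) * (c₁₀ * P₁ (k + 2)))
      = c₀₁ * c₁₁ * ((3 : ℝ) ^ lam₀ + (3 : ℝ) ^ lam₁ + 2) * (P₀ (k + 1) * P₁ (k + 2)) := by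
    field_simp
  have hKDlb : c₀₁ * c₁₁ * ((3 : ℝ) ^ lam₀ + (3 : ℝ) ^ lam₁ + 2) * (P₀ (k + 1) * P₁ (k + 2))
      ≤ (c₀₁ * c₁₁) / (c₀₀ * c₁₀) * ((3 : ℝ) ^ lam₀ + (3 : ℝ) ^ lam₁ + 2) * |D| := by
    rw [← hKD]
    exact mul_le_mul_of_nonneg_left hDlb hKnonneg
  have hccnn : (0:ℝ) ≤ c₀₁ * c₁₁ := le_of_lt (mul_pos hc₀₁pos hc₁₁pos)
  have hQpos : 0 < P₀ (k + 1) * P₁ (k + 2) := mul_pos (hP₀pos _) (hP₁pos _)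
  constructor
  · rw [ha₁ k, abs_div, div_le_iff₀ hDpos]
    have hN : |b₀ (k + 2) * b₁ k - b₁ (k + 2) * b₀ k|
        ≤ c₀₁ * P₀ (k + 2) * (c₁₁ * P₁ k) + c₁₁ * P₁ (k + 2) * (c₀₁ * P₀ k) := by
      calc |b₀ (k + 2) * b₁ k - b₁ (k + 2) * b₀ k|
          ≤ |b₀ (k + 2) * b₁ k| + |b₁ (k + 2) * b₀ k| := abs_sub _ _
        _ = b₀ (k + 2) * |b₁ k| + |b₁ (k + 2)| * b₀ k := by
            rw [abs_mul, abs_mul, hb₀abs, hb₀abs]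
        _ ≤ c₀₁ * P₀ (k + 2) * (c₁₁ * P₁ k) + c₁₁ * P₁ (k + 2) * (c₀₁ * P₀ k) :=
            add_le_add
              (mul_le_mul (hb₀ub _) (hb₁ub _) (abs_nonneg _)
                (le_of_lt (mul_pos hc₀₁pos (hP₀pos _))))
              (mul_le_mul (hb₁ub _) (hb₀ub _) (le_of_lt (hb₀pos _))
                (le_of_lt (mul_pos hc₁₁pos (hP₁pos _))))
    refine hN.trans (le_trans ?_ hKDlb)
    have h1 : P₁ k ≤ P₁ (k + 2) := hP₁mono _ _ (by omega)
    have h2 : P₀ k ≤ P₀ (k + 1) := hP₀mono _ _ (by omega)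
    have hA : P₀ (k + 2) * P₁ k ≤ (3 : ℝ) ^ lam₀ * (P₀ (k + 1) * P₁ (k + 2)) := by
      have := mul_le_mul h3pow h1 (le_of_lt (hP₁pos k))
        (le_of_lt (mul_pos h3₀pos (hP₀pos _)))
      linarith [this]
    have hB : P₀ k * P₁ (k + 2) ≤ P₀ (k + 1) * P₁ (k + 2) :=
      mul_le_mul_of_nonneg_right h2 (le_of_lt (hP₁pos _))
    have hA' := mul_le_mul_of_nonneg_left hA hccnn
    have hB' := mul_le_mul_of_nonneg_left hB hccnn
    have hpos1 : 0 ≤ c₀₁ * c₁₁ * ((3 : ℝ) ^ lam₁ * (P₀ (k + 1) * P₁ (k + 2))) :=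
      mul_nonneg hccnn (le_of_lt (mul_pos h3₁pos hQpos))
    have hpos2 : 0 ≤ c₀₁ * c₁₁ * (P₀ (k + 1) * P₁ (k + 2)) :=
      mul_nonneg hccnn (le_of_lt hQpos)
    linarith [hA', hB', hpos1, hpos2]
  · rw [ha₂ k, abs_div, div_le_iff₀ hDpos]
    have hN : |b₁ (k + 1) * b₀ k - b₀ (k + 1) * b₁ k|
        ≤ c₁₁ * P₁ (k + 1) * (c₀₁ * P₀ k) + c₀₁ * P₀ (k + 1) * (c₁₁ * P₁ k) := by
      calc |b₁ (k + 1) * b₀ k - b₀ (k + 1) * b₁ k|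
          ≤ |b₁ (k + 1) * b₀ k| + |b₀ (k + 1) * b₁ k| := abs_sub _ _
        _ = |b₁ (k + 1)| * b₀ k + b₀ (k + 1) * |b₁ k| := by
            rw [abs_mul, abs_mul, hb₀abs, hb₀abs]
        _ ≤ c₁₁ * P₁ (k + 1) * (c₀₁ * P₀ k) + c₀₁ * P₀ (k + 1) * (c₁₁ * P₁ k) :=
            add_le_add
              (mul_le_mul (hb₁ub _) (hb₀ub _) (le_of_lt (hb₀pos _))
                (le_of_lt (mul_pos hc₁₁pos (hP₁pos _))))
              (mul_le_mul (hb₀ub _) (hb₁ub _) (abs_nonneg _)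
                (le_of_lt (mul_pos hc₀₁pos (hP₀pos _))))
    refine hN.trans (le_trans ?_ hKDlb)
    have h1 : P₁ (k + 1) ≤ P₁ (k + 2) := hP₁mono _ _ (by omega)
    have h2 : P₀ k ≤ P₀ (k + 1) := hP₀mono _ _ (by omega)
    have h3 : P₁ k ≤ P₁ (k + 2) := hP₁mono _ _ (by omega)
    have hA : P₁ (k + 1) * P₀ k ≤ P₀ (k + 1) * P₁ (k + 2) := by
      have := mul_le_mul h1 h2 (le_of_lt (hP₀pos k)) (le_of_lt (hP₁pos (k + 2)))
      linarith [this]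
    have hB : P₀ (k + 1) * P₁ k ≤ P₀ (k + 1) * P₁ (k + 2) :=
      mul_le_mul_of_nonneg_left h3 (le_of_lt (hP₀pos _))
    have hA' := mul_le_mul_of_nonneg_left hA hccnn
    have hB' := mul_le_mul_of_nonneg_left hB hccnn
    have hpos1 : 0 ≤ c₀₁ * c₁₁ * ((3 : ℝ) ^ lam₁ * (P₀ (k + 1) * P₁ (k + 2))) :=
      mul_nonneg hccnn (le_of_lt (mul_pos h3₁pos hQpos))
    have hpos2 : 0 ≤ c₀₁ * c₁₁ * ((3 : ℝ) ^ lam₀ * (P₀ (k + 1) * P₁ (k + 2))) :=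
      mul_nonneg hccnn (le_of_lt (mul_pos h3₀pos hQpos))
    linarith [hA', hB', hpos1, hpos2]
end

section
/- Let b₀, b₁ : ℕ → ℝ satisfy: b₀(n) > 0 and (−1)ⁿb₁(n) > 0 for all n, and suppose |b₀(n)| ≥ c(n+1)^{λ} for all n with constants c > 0 and λ > 0. Then: (i) the 2×2 matrix G = [[b₀(0), b₀(1)],[b₁(0), b₁(1)]] is invertible; (ii) defining for each n ≥ 2 the numbers â₀(n), â₁(n) by the equations bᵢ(n) + â₀(n)bᵢ(0) + â₁(n)bᵢ(1) = 0 (i = 0,1), and the infinite matrix Â with Â(n,n) = 1 for all n, Â(0,n) = â₀(n) and Â(1,n) = â₁(n) for n ≥ 2, and all other entries zero, one has sup_n (â₀(n)² + â₁(n)²) = ∞; consequently Â is not bounded on ℓ²: there is no constant C with ‖Âx‖₂ ≤ C‖x‖₂ for all finitely supported x : ℕ → ℝ. -/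
theorem first_two_recombination_unbounded
    (b₀ b₁ : ℕ → ℝ)
    (hb₀pos : ∀ n : ℕ, 0 < b₀ n)
    (hb₁alt : ∀ n : ℕ, 0 < (-1 : ℝ) ^ n * b₁ n)
    (c lam : ℝ) (hc : 0 < c) (hlam : 0 < lam)
    (hb₀lb : ∀ n : ℕ, c * ((n : ℝ) + 1) ^ lam ≤ |b₀ n|)
    (ahat₀ ahat₁ : ℕ → ℝ)
    (hsolve : ∀ n : ℕ, 2 ≤ n →
      (b₀ n + ahat₀ n * b₀ 0 + ahat₁ n * b₀ 1 = 0 ∧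
       b₁ n + ahat₀ n * b₁ 0 + ahat₁ n * b₁ 1 = 0))
    (Ahat : ℕ → ℕ → ℝ)
    (hAhatdiag : ∀ n : ℕ, Ahat n n = 1)
    (hAhat₀ : ∀ n : ℕ, 2 ≤ n → Ahat 0 n = ahat₀ n)
    (hAhat₁ : ∀ n : ℕ, 2 ≤ n → Ahat 1 n = ahat₁ n)
    (hAhatzero : ∀ i j : ℕ, i ≠ j → ¬(i ≤ 1 ∧ 2 ≤ j) → Ahat i j = 0) :
    IsUnit (Matrix.of ![![b₀ 0, b₀ 1], ![b₁ 0, b₁ 1]] : Matrix (Fin 2) (Fin 2) ℝ) ∧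
    (¬ ∃ K : ℝ, ∀ n : ℕ, (ahat₀ n) ^ 2 + (ahat₁ n) ^ 2 ≤ K) ∧
    (¬ ∃ C : ℝ, ∀ x : ℕ → ℝ, (Function.support x).Finite →
        l2norm (applyMat Ahat x) ≤ C * l2norm x) := by
  -- basic sign facts
  have hb10 : 0 < b₁ 0 := by have := hb₁alt 0; simpa using this
  have hb11 : b₁ 1 < 0 := by have := hb₁alt 1; simp at this; linarith
  -- existence of large n
  have hT : ∀ T : ℝ, ∃ n : ℕ, 2 ≤ n ∧ T < c * ((n : ℝ) + 1) ^ lam := by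
    intro T
    have h1 : Filter.Tendsto (fun n : ℕ => c * ((n : ℝ) + 1) ^ lam)
        Filter.atTop Filter.atTop := by
      apply Filter.Tendsto.const_mul_atTop hc
      exact (tendsto_rpow_atTop hlam).comp
        (Filter.tendsto_atTop_add_const_right _ 1 tendsto_natCast_atTop_atTop)
    obtain ⟨N, hN⟩ := Filter.eventually_atTop.mp (h1.eventually_gt_atTop T)
    exact ⟨max N 2, le_max_right _ _, hN _ (le_max_left _ _)⟩
  -- key unboundedness
  have key : ∀ K : ℝ, ∃ n : ℕ, 2 ≤ n ∧ K < (ahat₀ n) ^ 2 + (ahat₁ n) ^ 2 := by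
    intro K
    set B : ℝ := b₀ 0 ^ 2 + b₀ 1 ^ 2 with hB
    have hBpos : 0 < B := by nlinarith [hb₀pos 0, hb₀pos 1]
    set T : ℝ := Real.sqrt (max K 0 * B) with hTdef
    obtain ⟨n, hn2, hn⟩ := hT T
    have hTnn : 0 ≤ T := Real.sqrt_nonneg _
    have hTsq : T ^ 2 = max K 0 * B := by
      rw [hTdef, Real.sq_sqrt]
      positivity
    have hbn : T < b₀ n := by
      have := hb₀lb n
      rw [abs_of_pos (hb₀pos n)] at this
      linarith
    obtain ⟨heq, -⟩ := hsolve n hn2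
    refine ⟨n, hn2, ?_⟩
    have hKle : K ≤ max K 0 := le_max_left _ _
    nlinarith [sq_nonneg (ahat₀ n * b₀ 1 - ahat₁ n * b₀ 0), sq_nonneg (b₀ n),
      mul_pos hBpos hBpos, sq_nonneg T]
  refine ⟨?_, ?_, ?_⟩
  · rw [Matrix.isUnit_iff_isUnit_det]
    rw [Matrix.det_fin_two_of]
    apply isUnit_iff_ne_zero.mpr
    have : b₀ 0 * b₁ 1 - b₀ 1 * b₁ 0 < 0 := by
      nlinarith [hb₀pos 0, hb₀pos 1]
    linarith
  · rintro ⟨K, hK⟩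
    obtain ⟨n, -, h⟩ := key K
    exact absurd (hK n) (not_le.mpr h)
  · rintro ⟨C, hC⟩
    obtain ⟨n, hn2, h⟩ := key (C ^ 2)
    set x : ℕ → ℝ := fun j => if j = n then (1 : ℝ) else 0 with hx
    have hsupp : (Function.support x).Finite := by
      apply Set.Finite.subset (Set.finite_singleton n)
      intro j hj
      by_contra hjn
      simp only [Set.mem_singleton_iff] at hjn
      exact hj (by simp [hx, hjn])
    have hxnorm : l2norm x = 1 := by
      have : ∑' m, (x m) ^ 2 = 1 := by
        have : (fun m => (x m) ^ 2) = fun m => if m = n then (1 : ℝ) else 0 := by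
          funext m; by_cases hm : m = n <;> simp [hx, hm]
        rw [this, tsum_ite_eq]
      rw [l2norm, this, Real.sqrt_one]
    have happly : ∀ i, applyMat Ahat x i = Ahat i n := by
      intro i
      rw [applyMat]
      rw [tsum_eq_single n (fun j hj => by simp [hx, hj])]
      simp [hx]
    have hAnorm : l2norm (applyMat Ahat x)
        = Real.sqrt ((ahat₀ n) ^ 2 + (ahat₁ n) ^ 2 + 1) := by
      rw [l2norm]
      congr 1
      have hsum : ∑' i, (applyMat Ahat x i) ^ 2
          = ∑ i ∈ ({0, 1, n} : Finset ℕ), (Ahat i n) ^ 2 := by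
        rw [tsum_congr (fun i => by rw [happly i])]
        apply tsum_eq_sum
        intro i hi
        simp only [Finset.mem_insert, Finset.mem_singleton, not_or] at hi
        obtain ⟨h0, h1, hn⟩ := hi
        have : Ahat i n = 0 := by
          apply hAhatzero i n hn
          rintro ⟨hle, -⟩
          interval_cases i <;> simp_all
        simp [this]
      rw [hsum]
      have h01 : (0 : ℕ) ≠ 1 := by norm_num
      have h0n : (0 : ℕ) ≠ n := by omega
      have h1n : (1 : ℕ) ≠ n := by omega
      rw [Finset.sum_insert (by simp [h01, h0n]),
        Finset.sum_insert (by simp [h1n]), Finset.sum_singleton]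
      rw [hAhat₀ n hn2, hAhat₁ n hn2, hAhatdiag n]
      ring
    have hbound := hC x hsupp
    rw [hxnorm, hAnorm, mul_one] at hbound
    have hS : (0:ℝ) ≤ (ahat₀ n) ^ 2 + (ahat₁ n) ^ 2 + 1 := by positivity
    nlinarith [Real.sq_sqrt hS, Real.sqrt_nonneg ((ahat₀ n) ^ 2 + (ahat₁ n) ^ 2 + 1)]
end

section
/- Let n ∈ ℕ, let a, l ∈ ℕ, and let A, C, L be n×n complex matrices such that: C is upper triangular and invertible; A is lower triangular and banded with lower bandwidth a, i.e. A(i,j) = 0 unless 0 ≤ i − j ≤ a; and L has lower bandwidth l, i.e. L(i,j) = 0 whenever i − j > l. If the matrix S := Aᴴ C⁻¹ L A is Hermitian (S = Sᴴ), then S is banded with total bandwidth a + l: S(i,j) = 0 whenever |i − j| > a + l. -/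
open Matrix

theorem petrov_galerkin_banded
    (n a l : ℕ)
    (A C L : Matrix (Fin n) (Fin n) ℂ)
    (hCupper : ∀ i j : Fin n, (j : ℕ) < (i : ℕ) → C i j = 0)
    (hCinv : IsUnit C)
    (hAband : ∀ i j : Fin n, ((i : ℕ) < (j : ℕ) ∨ (j : ℕ) + a < (i : ℕ)) → A i j = 0)
    (hLband : ∀ i j : Fin n, (j : ℕ) + l < (i : ℕ) → L i j = 0)
    (hHerm : (Aᴴ * C⁻¹ * L * A) = (Aᴴ * C⁻¹ * L * A)ᴴ) :
    ∀ i j : Fin n, ((i : ℕ) + (a + l) < (j : ℕ) ∨ (j : ℕ) + (a + l) < (i : ℕ)) →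
      (Aᴴ * C⁻¹ * L * A) i j = 0 := by
  haveI := hCinv.invertible
  have hBT : C.BlockTriangular (fun i : Fin n => (i : ℕ)) := fun i j h => hCupper i j h
  have hCinvU : ∀ i j : Fin n, (j : ℕ) < (i : ℕ) → C⁻¹ i j = 0 :=
    fun i j h => Matrix.blockTriangular_inv_of_blockTriangular hBT h
  have hlow : ∀ i j : Fin n, (j : ℕ) + (a + l) < (i : ℕ) →
      (Aᴴ * C⁻¹ * L * A) i j = 0 := by
    intro i j hij
    rw [mul_assoc, mul_assoc]
    simp only [Matrix.mul_apply, Matrix.conjTranspose_apply, Finset.mul_sum]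
    apply Finset.sum_eq_zero; intro k _
    apply Finset.sum_eq_zero; intro m _
    apply Finset.sum_eq_zero; intro p _
    by_cases hki : (k : ℕ) < (i : ℕ)
    · simp [hAband k i (Or.inl hki)]
    by_cases hmk : (m : ℕ) < (k : ℕ)
    · simp [hCinvU k m hmk]
    by_cases hpm : (p : ℕ) + l < (m : ℕ)
    · simp [hLband m p hpm]
    · have hpj : (j : ℕ) + a < (p : ℕ) := by omega
      simp [hAband p j (Or.inr hpj)]
  intro i j h
  rcases h with h | h
  · have h0 := hlow j i (by omega)
    have : (Aᴴ * C⁻¹ * L * A) i j = star ((Aᴴ * C⁻¹ * L * A) j i) := by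
      conv_lhs => rw [hHerm, Matrix.conjTranspose_apply]
    rw [this, h0, star_zero]
  · exact hlow i j h
end

section
/- For every integer n ≥ 1, the real inequality 2(n+1)(n+2)/((2n+1)(2n+5)) + √((n+1)(n+2)(n+3)(n+4)/((2n+3)(2n+5)²(2n+7))) + √((n−1)n(n+1)(n+2)/((2n−1)(2n+1)²(2n+3))) ≤ 1 holds. Consequently, for every σ ≥ 0 and n ≥ 1, the left boundary ℓₙ of the nth Gerschgorin disk of D − σM satisfies ℓₙ = (n+1)(n+2) − σ·(the parenthesized sum) ≥ (n+1)(n+2) − σ. -/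
/-- The off-diagonal Gerschgorin term `|M(n,n+2)|` of the mass matrix. -/
noncomputable def offDiagUpper (n : ℕ) : ℝ :=
  Real.sqrt (((n : ℝ) + 1) * ((n : ℝ) + 2) * ((n : ℝ) + 3) * ((n : ℝ) + 4) /
    ((2 * (n : ℝ) + 3) * (2 * (n : ℝ) + 5) ^ 2 * (2 * (n : ℝ) + 7)))

/-- The off-diagonal Gerschgorin term `|M(n,n-2)|` of the mass matrix
(read as `0` when `n < 2`, since the numerator contains the factors `n-1` and `n`). -/
noncomputable def offDiagLower (n : ℕ) : ℝ :=
  Real.sqrt (((n : ℝ) - 1) * (n : ℝ) * ((n : ℝ) + 1) * ((n : ℝ) + 2) /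
    ((2 * (n : ℝ) - 1) * (2 * (n : ℝ) + 1) ^ 2 * (2 * (n : ℝ) + 3)))

/-- The diagonal entry `M(n,n)` of the mass matrix. -/
noncomputable def massDiag (n : ℕ) : ℝ :=
  2 * ((n : ℝ) + 1) * ((n : ℝ) + 2) / ((2 * (n : ℝ) + 1) * (2 * (n : ℝ) + 5))

theorem gerschgorin_row_sum_le_one :
    ∀ n : ℕ, 1 ≤ n →
      (massDiag n + offDiagUpper n + offDiagLower n ≤ 1 ∧
       ∀ σ : ℝ, 0 ≤ σ →
         ((n : ℝ) + 1) * ((n : ℝ) + 2) - σ ≤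
           ((n : ℝ) + 1) * ((n : ℝ) + 2) -
             σ * (massDiag n + offDiagUpper n + offDiagLower n)) := by
  intro n hn
  have hx : (1 : ℝ) ≤ (n : ℝ) := by exact_mod_cast hn
  set x : ℝ := (n : ℝ) with hxdef
  have hx0 : (0 : ℝ) ≤ x := by linarith
  -- bound for offDiagUpper
  have hq1 : (0 : ℝ) ≤ (x ^ 2 + 5 * x + 5) / (4 * x ^ 2 + 20 * x + 23) := by positivity
  have h1 : offDiagUpper n ≤ (x ^ 2 + 5 * x + 5) / (4 * x ^ 2 + 20 * x + 23) := by
    unfold offDiagUpper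
    rw [show ((n : ℝ)) = x from rfl]
    have hle : (x + 1) * (x + 2) * (x + 3) * (x + 4) /
        ((2 * x + 3) * (2 * x + 5) ^ 2 * (2 * x + 7)) ≤
        ((x ^ 2 + 5 * x + 5) / (4 * x ^ 2 + 20 * x + 23)) ^ 2 := by
      rw [div_pow, div_le_div_iff₀ (by positivity) (by positivity)]
      nlinarith [pow_nonneg hx0 4, pow_nonneg hx0 3, pow_nonneg hx0 2, hx0]
    calc Real.sqrt ((x + 1) * (x + 2) * (x + 3) * (x + 4) /
          ((2 * x + 3) * (2 * x + 5) ^ 2 * (2 * x + 7)))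
        ≤ Real.sqrt (((x ^ 2 + 5 * x + 5) / (4 * x ^ 2 + 20 * x + 23)) ^ 2) :=
          Real.sqrt_le_sqrt hle
      _ = (x ^ 2 + 5 * x + 5) / (4 * x ^ 2 + 20 * x + 23) := Real.sqrt_sq hq1
  -- bound for offDiagLower
  have hq2num : (0 : ℝ) ≤ x ^ 2 + x - 1 := by nlinarith
  have hq2den : (0 : ℝ) < 4 * x ^ 2 + 4 * x - 1 := by nlinarith
  have hq2 : (0 : ℝ) ≤ (x ^ 2 + x - 1) / (4 * x ^ 2 + 4 * x - 1) :=
    div_nonneg hq2num hq2den.le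
  have h2 : offDiagLower n ≤ (x ^ 2 + x - 1) / (4 * x ^ 2 + 4 * x - 1) := by
    unfold offDiagLower
    rw [show ((n : ℝ)) = x from rfl]
    have hd2 : (0 : ℝ) < (2 * x - 1) * (2 * x + 1) ^ 2 * (2 * x + 3) := by nlinarith
    have hle : (x - 1) * x * (x + 1) * (x + 2) /
        ((2 * x - 1) * (2 * x + 1) ^ 2 * (2 * x + 3)) ≤
        ((x ^ 2 + x - 1) / (4 * x ^ 2 + 4 * x - 1)) ^ 2 := by
      rw [div_pow, div_le_div_iff₀ hd2 (by positivity)]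
      nlinarith [pow_nonneg hx0 4, pow_nonneg hx0 3, pow_nonneg hx0 2, hx0,
        mul_le_mul_of_nonneg_left hx (le_of_lt (by nlinarith : (0:ℝ) < x))]
    calc Real.sqrt ((x - 1) * x * (x + 1) * (x + 2) /
          ((2 * x - 1) * (2 * x + 1) ^ 2 * (2 * x + 3)))
        ≤ Real.sqrt (((x ^ 2 + x - 1) / (4 * x ^ 2 + 4 * x - 1)) ^ 2) :=
          Real.sqrt_le_sqrt hle
      _ = (x ^ 2 + x - 1) / (4 * x ^ 2 + 4 * x - 1) := Real.sqrt_sq hq2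
  -- the rational sum bound
  have hmd : massDiag n = 2 * (x + 1) * (x + 2) / ((2 * x + 1) * (2 * x + 5)) := rfl
  have hsum : massDiag n + offDiagUpper n + offDiagLower n ≤ 1 := by
    have hkey : 2 * (x + 1) * (x + 2) / ((2 * x + 1) * (2 * x + 5)) +
        (x ^ 2 + 5 * x + 5) / (4 * x ^ 2 + 20 * x + 23) +
        (x ^ 2 + x - 1) / (4 * x ^ 2 + 4 * x - 1) ≤ 1 := by
      have hA : (0 : ℝ) < (2 * x + 1) * (2 * x + 5) := by positivity
      have hB : (0 : ℝ) < 4 * x ^ 2 + 20 * x + 23 := by positivity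
      rw [div_add_div _ _ (ne_of_gt hA) (ne_of_gt hB),
        div_add_div _ _ (ne_of_gt (mul_pos hA hB)) (ne_of_gt hq2den),
        div_le_one (by positivity)]
      nlinarith [pow_nonneg hx0 2, hx0]
    rw [hmd]; linarith
  refine ⟨hsum, fun σ hσ => ?_⟩
  have := mul_le_mul_of_nonneg_left hsum hσ
  linarith [this]
end

section
/- For every integer n ≥ 0, the real inequality 2(n+1)(n+2)/((2n+1)(2n+5)) − √((n+1)(n+2)(n+3)(n+4)/((2n+3)(2n+5)²(2n+7))) − √((n−1)n(n+1)(n+2)/((2n−1)(2n+1)²(2n+3))) > 1/(2(n+1)(n+2)) holds (the second square-root term being 0 when n < 2). -/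
lemma sqrt_le_of_le_sq {x c : ℝ} (hc : 0 ≤ c) (h : x ≤ c ^ 2) : Real.sqrt x ≤ c := by
  calc Real.sqrt x ≤ Real.sqrt (c ^ 2) := Real.sqrt_le_sqrt h
  _ = c := Real.sqrt_sq hc

lemma sqrt_mul_le_half_add {A B : ℝ} (hA : 0 ≤ A) (hB : 0 ≤ B) :
    Real.sqrt (A * B) ≤ (A + B) / 2 := by
  apply sqrt_le_of_le_sq (by linarith)
  nlinarith [sq_nonneg (A - B)]

theorem gerschgorin_lower_boundary_bound :
    ∀ n : ℕ,
      1 / (2 * ((n : ℝ) + 1) * ((n : ℝ) + 2)) <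
        massDiag n - offDiagUpper n - offDiagLower n := by
  intro n
  match n with
  | 0 =>
    have h0 : offDiagLower 0 = 0 := by
      unfold offDiagLower
      norm_num
    have h1 : offDiagUpper 0 ≤ 1 / 2 := by
      unfold offDiagUpper
      apply sqrt_le_of_le_sq <;> norm_num
    have h2 : massDiag 0 = 4 / 5 := by
      unfold massDiag; norm_num
    rw [h0, h2]
    norm_num
    linarith
  | (m + 1) =>
    set y : ℝ := (m : ℝ) with hy
    have hy0 : (0 : ℝ) ≤ y := Nat.cast_nonneg m
    -- canonical forms
    have hmd : massDiag (m + 1) = 2 * (y + 2) * (y + 3) / ((2 * y + 3) * (2 * y + 7)) := by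
      unfold massDiag; push_cast; ring
    have hrhs : 1 / (2 * (((m + 1 : ℕ) : ℝ) + 1) * (((m + 1 : ℕ) : ℝ) + 2))
        = 1 / (2 * (y + 2) * (y + 3)) := by
      push_cast; ring
    have hU : offDiagUpper (m + 1) ≤
        ((y + 2) * (y + 3) / ((2 * y + 5) * (2 * y + 7))
          + (y + 4) * (y + 5) / ((2 * y + 7) * (2 * y + 9))) / 2 := by
      unfold offDiagUpper
      rw [show (((m + 1 : ℕ) : ℝ) + 1) * (((m + 1 : ℕ) : ℝ) + 2) * (((m + 1 : ℕ) : ℝ) + 3)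
            * (((m + 1 : ℕ) : ℝ) + 4) /
          ((2 * ((m + 1 : ℕ) : ℝ) + 3) * (2 * ((m + 1 : ℕ) : ℝ) + 5) ^ 2
            * (2 * ((m + 1 : ℕ) : ℝ) + 7))
          = ((y + 2) * (y + 3) / ((2 * y + 5) * (2 * y + 7)))
            * ((y + 4) * (y + 5) / ((2 * y + 7) * (2 * y + 9))) from by
          rw [div_mul_div_comm]; push_cast; congr 1 <;> ring]
      exact sqrt_mul_le_half_add (by positivity) (by positivity)
    have hL : offDiagLower (m + 1) ≤
        (y * (y + 1) / ((2 * y + 1) * (2 * y + 3))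
          + (y + 2) * (y + 3) / ((2 * y + 3) * (2 * y + 5))) / 2 := by
      unfold offDiagLower
      rw [show (((m + 1 : ℕ) : ℝ) - 1) * ((m + 1 : ℕ) : ℝ) * (((m + 1 : ℕ) : ℝ) + 1)
            * (((m + 1 : ℕ) : ℝ) + 2) /
          ((2 * ((m + 1 : ℕ) : ℝ) - 1) * (2 * ((m + 1 : ℕ) : ℝ) + 1) ^ 2
            * (2 * ((m + 1 : ℕ) : ℝ) + 3))
          = (y * (y + 1) / ((2 * y + 1) * (2 * y + 3)))
            * ((y + 2) * (y + 3) / ((2 * y + 3) * (2 * y + 5))) from by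
          rw [div_mul_div_comm]; push_cast; congr 1 <;> ring]
      exact sqrt_mul_le_half_add (by positivity) (by positivity)
    have key : 1 / (2 * (y + 2) * (y + 3)) <
        2 * (y + 2) * (y + 3) / ((2 * y + 3) * (2 * y + 7))
          - ((y + 2) * (y + 3) / ((2 * y + 5) * (2 * y + 7))
              + (y + 4) * (y + 5) / ((2 * y + 7) * (2 * y + 9))) / 2
          - (y * (y + 1) / ((2 * y + 1) * (2 * y + 3))
              + (y + 2) * (y + 3) / ((2 * y + 3) * (2 * y + 5))) / 2 := by
      rw [← sub_pos]
      have h1 : (2 * y + 1) ≠ 0 := by positivity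
      have h2 : (2 * y + 3) ≠ 0 := by positivity
      have h3 : (2 * y + 5) ≠ 0 := by positivity
      have h4 : (2 * y + 7) ≠ 0 := by positivity
      have h5 : (2 * y + 9) ≠ 0 := by positivity
      have h6 : (y + 2) ≠ 0 := by positivity
      have h7 : (y + 3) ≠ 0 := by positivity
      have heq : 2 * (y + 2) * (y + 3) / ((2 * y + 3) * (2 * y + 7))
          - ((y + 2) * (y + 3) / ((2 * y + 5) * (2 * y + 7))
              + (y + 4) * (y + 5) / ((2 * y + 7) * (2 * y + 9))) / 2
          - (y * (y + 1) / ((2 * y + 1) * (2 * y + 3))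
              + (y + 2) * (y + 3) / ((2 * y + 3) * (2 * y + 5))) / 2
          - 1 / (2 * (y + 2) * (y + 3))
          = (1091475 + 4275180 * y + 7086636 * y ^ 2 + 6500640 * y ^ 3
              + 3614064 * y ^ 4 + 1248960 * y ^ 5 + 262464 * y ^ 6
              + 30720 * y ^ 7 + 1536 * y ^ 8)
            / (2 * (y + 2) * (y + 3) * (2 * y + 1) * (2 * y + 3) ^ 3
              * (2 * y + 5) ^ 2 * (2 * y + 7) ^ 3 * (2 * y + 9)) := by
        field_simp
        ring
      rw [heq]
      positivity
    rw [hrhs, hmd]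
    linarith
end
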